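/- Let (H_k) be row-stochastic matrices with τ₁(H_{k+L−1}⋯H_k) ≤ 1 − μ for all k (some L ∈ ℕ, μ ∈ (0,1]), and let tuples p_k in (ℝ²)^n satisfy p_{k+1,i} = ∑_j [H_k]_{ij} p_{k,j} + w_{k,i} with Δ(w_k) ≤ 2β̂ Δ(p_k). Then for all k, Δ(p_{k+L}) ≤ [(1 − μ) + ((1 + 2β̂)^L − 1)] · Δ(p_k). -/

import Mathlib

/-- disagreement seminorm on n-tuples of vectors in ℝ² -/
noncomputable def Delta {n : ℕ} (x : Fin n → EuclideanSpace ℝ (Fin 2)) : ℝ :=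
  ⨆ p : Fin n × Fin n, ‖x p.1 - x p.2‖

/-- row-stochastic matrix -/
def RowStochastic {n : ℕ} (A : Matrix (Fin n) (Fin n) ℝ) : Prop :=
  (∀ i j, 0 ≤ A i j) ∧ (∀ i, ∑ j, A i j = 1)

/-- coefficient of ergodicity -/
noncomputable def tau1 {n : ℕ} (A : Matrix (Fin n) (Fin n) ℝ) : ℝ :=
  (1/2) * ⨆ p : Fin n × Fin n, ∑ s, |A p.1 s - A p.2 s|

/-- the ordered backward product H_{k+L-1} ⋯ H_{k+1} H_k -/
noncomputable def backProd {n : ℕ} (H : ℕ → Matrix (Fin n) (Fin n) ℝ) (k L : ℕ) :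
    Matrix (Fin n) (Fin n) ℝ :=
  (List.ofFn (fun ℓ : Fin L => H (k + (L - 1 - ℓ.val)))).prod

section Aux

variable {n : ℕ}

/-- apply a matrix to a tuple of vectors -/
noncomputable def app (A : Matrix (Fin n) (Fin n) ℝ) (x : Fin n → EuclideanSpace ℝ (Fin 2)) :
    Fin n → EuclideanSpace ℝ (Fin 2) := fun i => ∑ j, A i j • x j

lemma norm_sub_le_Delta (x : Fin n → EuclideanSpace ℝ (Fin 2)) (i j : Fin n) :
    ‖x i - x j‖ ≤ Delta x :=
  le_ciSup (f := fun q : Fin n × Fin n => ‖x q.1 - x q.2‖)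
    (Set.Finite.bddAbove (Set.finite_range _)) (⟨i, j⟩ : Fin n × Fin n)

lemma Delta_nonneg (hn : 1 ≤ n) (x : Fin n → EuclideanSpace ℝ (Fin 2)) : 0 ≤ Delta x := by
  have h := norm_sub_le_Delta x ⟨0, hn⟩ ⟨0, hn⟩
  simpa using h

lemma Delta_le (hn : 1 ≤ n) {x : Fin n → EuclideanSpace ℝ (Fin 2)} {c : ℝ}
    (h : ∀ i j, ‖x i - x j‖ ≤ c) : Delta x ≤ c := by
  haveI : Nonempty (Fin n) := ⟨⟨0, hn⟩⟩
  exact ciSup_le fun q => h q.1 q.2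

lemma Delta_zero (hn : 1 ≤ n) : Delta (fun _ : Fin n => (0 : EuclideanSpace ℝ (Fin 2))) = 0 := by
  refine le_antisymm (Delta_le hn fun i j => by simp) (Delta_nonneg hn _)

lemma Delta_add_le (hn : 1 ≤ n) (x y : Fin n → EuclideanSpace ℝ (Fin 2)) :
    Delta (fun i => x i + y i) ≤ Delta x + Delta y := by
  refine Delta_le hn fun i j => ?_
  have : (x i + y i) - (x j + y j) = (x i - x j) + (y i - y j) := by abel
  rw [this]
  exact (norm_add_le _ _).trans (add_le_add (norm_sub_le_Delta x i j) (norm_sub_le_Delta y i j))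

lemma key_bound (hn : 1 ≤ n) (a : Fin n → ℝ) (ha : ∑ s, a s = 0)
    (x : Fin n → EuclideanSpace ℝ (Fin 2)) :
    ‖∑ s, a s • x s‖ ≤ ((1/2) * ∑ s, |a s|) * Delta x := by
  set P : Fin n → ℝ := fun s => max (a s) 0 with hP
  set N : Fin n → ℝ := fun s => max (-a s) 0 with hN
  have hPn : ∀ s, 0 ≤ P s := fun s => le_max_right _ _
  have hNn : ∀ s, 0 ≤ N s := fun s => le_max_right _ _
  have haPN : ∀ s, a s = P s - N s := by
    intro s; simp only [hP, hN]
    rcases le_total 0 (a s) with h | h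
    · rw [max_eq_left h, max_eq_right (neg_nonpos.mpr h)]; ring
    · rw [max_eq_right h, max_eq_left (neg_nonneg.mpr h)]; ring
  have habs : ∀ s, |a s| = P s + N s := by
    intro s; simp only [hP, hN]
    rcases le_total 0 (a s) with h | h
    · rw [abs_of_nonneg h, max_eq_left h, max_eq_right (neg_nonpos.mpr h)]; ring
    · rw [abs_of_nonpos h, max_eq_right h, max_eq_left (neg_nonneg.mpr h)]; ring
  set c := ∑ s, P s with hc
  have hcN : ∑ s, N s = c := by
    have h0 : (∑ s, P s) - (∑ s, N s) = 0 := by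
      rw [← Finset.sum_sub_distrib]
      calc ∑ s, (P s - N s) = ∑ s, a s := Finset.sum_congr rfl fun s _ => (haPN s).symm
        _ = 0 := ha
    linarith
  have hc0 : 0 ≤ c := Finset.sum_nonneg fun s _ => hPn s
  have habs_sum : (1/2) * ∑ s, |a s| = c := by
    rw [Finset.sum_congr rfl fun s _ => habs s, Finset.sum_add_distrib, hcN, ← hc]; ring
  rw [habs_sum]
  rcases eq_or_lt_of_le hc0 with h | h
  · have hP0 : ∀ s ∈ Finset.univ, P s = 0 :=
      (Finset.sum_eq_zero_iff_of_nonneg fun s _ => hPn s).mp h.symm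
    have hN0 : ∀ s ∈ Finset.univ, N s = 0 :=
      (Finset.sum_eq_zero_iff_of_nonneg fun s _ => hNn s).mp (hcN.trans h.symm)
    have ha0 : ∀ s, a s = 0 := fun s => by
      rw [haPN s, hP0 s (Finset.mem_univ s), hN0 s (Finset.mem_univ s)]; ring
    simp [ha0, ← h]
  · -- c > 0
    have e1 : ∀ s, ∑ t, ((P s * N t) / c) • x s = P s • x s := by
      intro s
      rw [← Finset.sum_smul]
      congr 1
      rw [← Finset.sum_div, ← Finset.mul_sum, hcN, mul_div_assoc, div_self h.ne', mul_one]
    have e2 : ∀ t, ∑ s, ((P s * N t) / c) • x t = N t • x t := by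
      intro t
      rw [← Finset.sum_smul]
      congr 1
      rw [← Finset.sum_div, ← Finset.sum_mul, ← hc, mul_comm, mul_div_assoc, div_self h.ne',
        mul_one]
    have key_eq : ∑ s, a s • x s = ∑ s, ∑ t, ((P s * N t) / c) • (x s - x t) := by
      have : ∑ s, a s • x s = (∑ s, P s • x s) - (∑ s, N s • x s) := by
        rw [← Finset.sum_sub_distrib]
        exact Finset.sum_congr rfl fun s _ => by rw [haPN s, sub_smul]
      rw [this]
      simp only [smul_sub, Finset.sum_sub_distrib]
      congr 1
      · exact (Finset.sum_congr rfl fun s _ => e1 s).symm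
      · rw [Finset.sum_comm]
        exact (Finset.sum_congr rfl fun t _ => e2 t).symm
    rw [key_eq]
    have hcoef : ∀ s t, 0 ≤ (P s * N t) / c :=
      fun s t => div_nonneg (mul_nonneg (hPn s) (hNn t)) hc0
    calc ‖∑ s, ∑ t, ((P s * N t) / c) • (x s - x t)‖
        ≤ ∑ s, ∑ t, ‖((P s * N t) / c) • (x s - x t)‖ := by
          refine (norm_sum_le _ _).trans (Finset.sum_le_sum fun s _ => norm_sum_le _ _)
      _ = ∑ s, ∑ t, ((P s * N t) / c) * ‖x s - x t‖ := by
          refine Finset.sum_congr rfl fun s _ => Finset.sum_congr rfl fun t _ => ?_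
          rw [norm_smul, Real.norm_eq_abs, abs_of_nonneg (hcoef s t)]
      _ ≤ ∑ s, ∑ t, ((P s * N t) / c) * Delta x := by
          refine Finset.sum_le_sum fun s _ => Finset.sum_le_sum fun t _ => ?_
          exact mul_le_mul_of_nonneg_left (norm_sub_le_Delta x s t) (hcoef s t)
      _ = (∑ s, ∑ t, (P s * N t) / c) * Delta x := by
          rw [Finset.sum_mul]
          exact Finset.sum_congr rfl fun s _ => (Finset.sum_mul _ _ _).symm
      _ = c * Delta x := by
          congr 1
          calc ∑ s, ∑ t, P s * N t / c = ∑ s, P s * c / c := by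
                refine Finset.sum_congr rfl fun s _ => ?_
                rw [← Finset.sum_div, ← Finset.mul_sum, hcN]
            _ = ∑ s, P s := by
                refine Finset.sum_congr rfl fun s _ => ?_
                rw [mul_div_assoc, div_self h.ne', mul_one]
            _ = c := hc.symm

lemma app_sub_eq (A : Matrix (Fin n) (Fin n) ℝ) (x : Fin n → EuclideanSpace ℝ (Fin 2))
    (i j : Fin n) : app A x i - app A x j = ∑ s, (A i s - A j s) • x s := by
  simp [app, sub_smul, Finset.sum_sub_distrib]

lemma row_diff_sum {A : Matrix (Fin n) (Fin n) ℝ} (hA : RowStochastic A) (i j : Fin n) :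
    ∑ s, (A i s - A j s) = 0 := by
  rw [Finset.sum_sub_distrib, hA.2 i, hA.2 j]; ring

lemma Delta_app_le_tau1 (hn : 1 ≤ n) {A : Matrix (Fin n) (Fin n) ℝ} (hA : RowStochastic A)
    (x : Fin n → EuclideanSpace ℝ (Fin 2)) : Delta (app A x) ≤ tau1 A * Delta x := by
  refine Delta_le hn fun i j => ?_
  rw [app_sub_eq]
  refine (key_bound hn _ (row_diff_sum hA i j) x).trans ?_
  refine mul_le_mul_of_nonneg_right ?_ (Delta_nonneg hn x)
  unfold tau1
  refine mul_le_mul_of_nonneg_left ?_ (by norm_num)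
  exact le_ciSup (f := fun q : Fin n × Fin n => ∑ s, |A q.1 s - A q.2 s|)
    (Set.Finite.bddAbove (Set.finite_range _)) (⟨i, j⟩ : Fin n × Fin n)

lemma Delta_app_le (hn : 1 ≤ n) {A : Matrix (Fin n) (Fin n) ℝ} (hA : RowStochastic A)
    (x : Fin n → EuclideanSpace ℝ (Fin 2)) : Delta (app A x) ≤ Delta x := by
  refine Delta_le hn fun i j => ?_
  rw [app_sub_eq]
  refine (key_bound hn _ (row_diff_sum hA i j) x).trans ?_
  have h1 : (1/2 : ℝ) * ∑ s, |A i s - A j s| ≤ 1 := by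
    have : ∑ s, |A i s - A j s| ≤ ∑ s, (A i s + A j s) := by
      refine Finset.sum_le_sum fun s _ => ?_
      calc |A i s - A j s| ≤ |A i s| + |A j s| := abs_sub _ _
        _ = A i s + A j s := by
            rw [abs_of_nonneg (hA.1 i s), abs_of_nonneg (hA.1 j s)]
    have h2 : ∑ s, (A i s + A j s) = 2 := by
      rw [Finset.sum_add_distrib, hA.2 i, hA.2 j]; norm_num
    linarith
  calc ((1/2 : ℝ) * ∑ s, |A i s - A j s|) * Delta x ≤ 1 * Delta x :=
        mul_le_mul_of_nonneg_right h1 (Delta_nonneg hn x)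
    _ = Delta x := one_mul _

lemma RowStochastic.mul {A B : Matrix (Fin n) (Fin n) ℝ} (hA : RowStochastic A)
    (hB : RowStochastic B) : RowStochastic (A * B) := by
  constructor
  · intro i j
    rw [Matrix.mul_apply]
    exact Finset.sum_nonneg fun s _ => mul_nonneg (hA.1 i s) (hB.1 s j)
  · intro i
    simp only [Matrix.mul_apply]
    rw [Finset.sum_comm]
    calc ∑ s, ∑ j, A i s * B s j = ∑ s, A i s * ∑ j, B s j := by
          exact Finset.sum_congr rfl fun s _ => (Finset.mul_sum _ _ _).symm
      _ = ∑ s, A i s := by simp [hB.2]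
      _ = 1 := hA.2 i

lemma RowStochastic.one : RowStochastic (1 : Matrix (Fin n) (Fin n) ℝ) := by
  constructor
  · intro i j
    by_cases h : i = j <;> simp [Matrix.one_apply, h]
  · intro i
    simp [Matrix.one_apply]

lemma backProd_zero (H : ℕ → Matrix (Fin n) (Fin n) ℝ) (k : ℕ) : backProd H k 0 = 1 := by
  simp [backProd]

lemma backProd_succ (H : ℕ → Matrix (Fin n) (Fin n) ℝ) (k L : ℕ) :
    backProd H k (L + 1) = H (k + L) * backProd H k L := by
  unfold backProd
  rw [List.ofFn_succ, List.prod_cons]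
  have h2 : (List.ofFn fun i : Fin L => H (k + (L + 1 - 1 - (i.val + 1))))
      = List.ofFn fun ℓ : Fin L => H (k + (L - 1 - ℓ.val)) := by
    congr 1
    funext i
    have hnat : L + 1 - 1 - (i.val + 1) = L - 1 - i.val := by omega
    rw [hnat]
  simp only [Fin.val_succ, Fin.val_zero, Nat.sub_zero, Nat.add_sub_cancel] at h2 ⊢
  rw [h2]

lemma backProd_rowStochastic (H : ℕ → Matrix (Fin n) (Fin n) ℝ) (hH : ∀ k, RowStochastic (H k))
    (k : ℕ) : ∀ L, RowStochastic (backProd H k L) := by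
  intro L
  induction L with
  | zero => rw [backProd_zero]; exact RowStochastic.one
  | succ L ih => rw [backProd_succ]; exact (hH (k + L)).mul ih

lemma app_one (x : Fin n → EuclideanSpace ℝ (Fin 2)) :
    app (1 : Matrix (Fin n) (Fin n) ℝ) x = x := by
  funext i
  simp [app, Matrix.one_apply, ite_smul, Finset.sum_ite_eq]

lemma app_mul (A B : Matrix (Fin n) (Fin n) ℝ) (x : Fin n → EuclideanSpace ℝ (Fin 2)) :
    app (A * B) x = app A (app B x) := by
  funext i
  simp only [app, Matrix.mul_apply, Finset.sum_smul, Finset.smul_sum, smul_smul]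
  rw [Finset.sum_comm]

end Aux

/-- L-step disagreement bound for the perturbed consensus recursion. -/
theorem L_step_disagreement {n : ℕ} (hn : 1 ≤ n)
    (H : ℕ → Matrix (Fin n) (Fin n) ℝ) (hH : ∀ k, RowStochastic (H k))
    (L : ℕ) (hL : 1 ≤ L) (μ : ℝ) (hμ : μ ∈ Set.Ioc (0:ℝ) 1)
    (hmix : ∀ k, tau1 (backProd H k L) ≤ 1 - μ)
    (p w : ℕ → Fin n → EuclideanSpace ℝ (Fin 2))
    (β : ℝ) (hβ : 0 ≤ β)
    (hrec : ∀ k i, p (k+1) i = (∑ j, H k i j • p k j) + w k i)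
    (hw : ∀ k, Delta (w k) ≤ 2 * β * Delta (p k)) :
    ∀ k, Delta (p (k+L)) ≤ ((1 - μ) + ((1 + 2*β)^L - 1)) * Delta (p k) := by
  intro k
  have D0 : 0 ≤ Delta (p k) := Delta_nonneg hn (p k)
  have hq : (0:ℝ) ≤ 1 + 2*β := by linarith
  -- growth of Delta
  have grow : ∀ ℓ, Delta (p (k + ℓ)) ≤ (1 + 2*β)^ℓ * Delta (p k) := by
    intro ℓ
    induction ℓ with
    | zero => simp
    | succ ℓ ih =>
      have heq : p (k + (ℓ + 1)) = fun i => app (H (k + ℓ)) (p (k + ℓ)) i + w (k + ℓ) i := by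
        funext i
        exact hrec (k + ℓ) i
      rw [heq]
      calc Delta (fun i => app (H (k + ℓ)) (p (k + ℓ)) i + w (k + ℓ) i)
          ≤ Delta (app (H (k + ℓ)) (p (k + ℓ))) + Delta (w (k + ℓ)) := Delta_add_le hn _ _
        _ ≤ Delta (p (k + ℓ)) + 2 * β * Delta (p (k + ℓ)) :=
            add_le_add (Delta_app_le hn (hH (k + ℓ)) _) (hw (k + ℓ))
        _ = (1 + 2*β) * Delta (p (k + ℓ)) := by ring
        _ ≤ (1 + 2*β) * ((1 + 2*β)^ℓ * Delta (p k)) := mul_le_mul_of_nonneg_left ih hq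
        _ = (1 + 2*β)^(ℓ+1) * Delta (p k) := by ring
  -- residual bound
  have rbound : ∀ ℓ, Delta (fun i => p (k + ℓ) i - app (backProd H k ℓ) (p k) i)
      ≤ ((1 + 2*β)^ℓ - 1) * Delta (p k) := by
    intro ℓ
    induction ℓ with
    | zero =>
      have : (fun i => p (k + 0) i - app (backProd H k 0) (p k) i)
          = fun _ : Fin n => (0 : EuclideanSpace ℝ (Fin 2)) := by
        funext i
        rw [backProd_zero, app_one]
        simp
      rw [this, Delta_zero hn]
      simp
    | succ ℓ ih =>
      have heq : (fun i => p (k + (ℓ + 1)) i - app (backProd H k (ℓ + 1)) (p k) i)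
          = fun i => app (H (k + ℓ))
              (fun j => p (k + ℓ) j - app (backProd H k ℓ) (p k) j) i + w (k + ℓ) i := by
        funext i
        rw [show k + (ℓ + 1) = (k + ℓ) + 1 from rfl, hrec (k + ℓ) i, backProd_succ, app_mul]
        simp only [app, smul_sub, Finset.sum_sub_distrib]
        abel
      rw [heq]
      calc Delta (fun i => app (H (k + ℓ))
              (fun j => p (k + ℓ) j - app (backProd H k ℓ) (p k) j) i + w (k + ℓ) i)
          ≤ Delta (app (H (k + ℓ)) (fun j => p (k + ℓ) j - app (backProd H k ℓ) (p k) j))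
              + Delta (w (k + ℓ)) := Delta_add_le hn _ _
        _ ≤ Delta (fun j => p (k + ℓ) j - app (backProd H k ℓ) (p k) j)
              + 2 * β * Delta (p (k + ℓ)) :=
            add_le_add (Delta_app_le hn (hH (k + ℓ)) _) (hw (k + ℓ))
        _ ≤ ((1 + 2*β)^ℓ - 1) * Delta (p k) + 2 * β * ((1 + 2*β)^ℓ * Delta (p k)) := by
            refine add_le_add ih ?_
            exact mul_le_mul_of_nonneg_left (grow ℓ) (by linarith)
        _ = ((1 + 2*β)^(ℓ+1) - 1) * Delta (p k) := by ring
  -- conclusion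
  have hdecomp : p (k + L) = fun i =>
      app (backProd H k L) (p k) i + (p (k + L) i - app (backProd H k L) (p k) i) := by
    funext i; abel
  calc Delta (p (k + L))
      = Delta (fun i => app (backProd H k L) (p k) i
          + (p (k + L) i - app (backProd H k L) (p k) i)) := by rw [← hdecomp]
    _ ≤ Delta (app (backProd H k L) (p k))
          + Delta (fun i => p (k + L) i - app (backProd H k L) (p k) i) := Delta_add_le hn _ _
    _ ≤ tau1 (backProd H k L) * Delta (p k) + ((1 + 2*β)^L - 1) * Delta (p k) :=
        add_le_add (Delta_app_le_tau1 hn (backProd_rowStochastic H hH k L) (p k)) (rbound L)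
    _ ≤ (1 - μ) * Delta (p k) + ((1 + 2*β)^L - 1) * Delta (p k) :=
        add_le_add_left (mul_le_mul_of_nonneg_right (hmix k) D0) _
    _ = ((1 - μ) + ((1 + 2*β)^L - 1)) * Delta (p k) := by ring
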